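/- Let (A, B) and (A', B') be co-t-structures on a triangulated category T. If A ⊆ A' ⊆ ΣA, then ΣB ⊆ B' ⊆ B, and the co-heart S' = A' ∩ Σ⁻¹B' of (A', B') is contained in S * ΣS, where S is the co-heart of (A, B). -/

import Mathlib

open CategoryTheory Category Limits Pretriangulated

variable {C : Type*} [Category C] [Preadditive C] [HasZeroObject C] [HasShift C ℤ]
  [∀ n : ℤ, (shiftFunctor C n).Additive] [Pretriangulated C]

/-- A co-t-structure on a triangulated category: a pair of full subcategories (given by
their classes of objects) closed under direct summands, with `Σ⁻¹A ⊆ A`, `ΣB ⊆ B`,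
`Hom(A, B) = 0`, and every object sitting in a triangle `a → t → b → Σa`. -/
structure CoTStructure (A B : Set C) : Prop where
  summandA : ∀ x y : C, (∃ (i : x ⟶ y) (r : y ⟶ x), i ≫ r = 𝟙 x) → y ∈ A → x ∈ A
  summandB : ∀ x y : C, (∃ (i : x ⟶ y) (r : y ⟶ x), i ≫ r = 𝟙 x) → y ∈ B → x ∈ B
  shiftA : ∀ x ∈ A, x⟦(-1 : ℤ)⟧ ∈ A
  shiftB : ∀ x ∈ B, x⟦(1 : ℤ)⟧ ∈ B
  orth : ∀ a ∈ A, ∀ b ∈ B, ∀ f : a ⟶ b, f = 0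
  tri : ∀ t : C, ∃ (a b : C) (_ : a ∈ A) (_ : b ∈ B) (f : a ⟶ t) (g : t ⟶ b)
    (h : b ⟶ a⟦(1 : ℤ)⟧), Triangle.mk f g h ∈ distTriang C

/-- The co-heart `A ∩ Σ⁻¹B` of a co-t-structure. -/
def coheart (A B : Set C) : Set C := {x | x ∈ A ∧ x⟦(1 : ℤ)⟧ ∈ B}

/-- `S * T`: objects `e` admitting a distinguished triangle `s → e → t → Σs`
with `s ∈ S`, `t ∈ T`. -/
def starSet (S T : Set C) : Set C :=
  {e | ∃ (s t : C) (_ : s ∈ S) (_ : t ∈ T) (f : s ⟶ e) (g : e ⟶ t)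
    (h : t ⟶ s⟦(1 : ℤ)⟧), Triangle.mk f g h ∈ distTriang C}

/-- `ΣS`, described as those `x` with `Σ⁻¹x ∈ S`. -/
def shiftSet (S : Set C) : Set C := {x | x⟦(-1 : ℤ)⟧ ∈ S}

/-- `S * ΣS`: objects `t` admitting a distinguished triangle `s₁ → s₀ → t → Σs₁`
with `s₀, s₁ ∈ S`. -/
def twoTermSet (S : Set C) : Set C :=
  {t | ∃ (s₁ s₀ : C) (_ : s₁ ∈ S) (_ : s₀ ∈ S) (f : s₁ ⟶ s₀) (g : s₀ ⟶ t)
    (h : t ⟶ s₁⟦(1 : ℤ)⟧), Triangle.mk f g h ∈ distTriang C}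

/-! For a co-t-structure `(A, B)`, `B` is exactly the class of objects receiving no nonzero map
from `A`, and dually; hence both classes are closed under extensions. Then `ΣB ⊆ B'` because
`Hom(A', ΣB) ≅ Hom(Σ⁻¹A', B) = 0`, and `B' ⊆ B` because `A ⊆ A'`. For `x` in the co-heart of
`(A', B')`, take its triangle `a → x → b → Σa` for `(A, B)`: `Σa` is an extension of
`Σx ∈ B' ⊆ B` by `b`, and `Σ⁻¹b` an extension of `a` by `Σ⁻¹x ∈ A`, so the rotated triangle
`Σ⁻¹b → a → x → b` exhibits `x ∈ S * ΣS`. -/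

namespace CoTStructure

variable {A B : Set C}

lemma mem_B_of_iso (h : CoTStructure A B) {x y : C} (e : x ≅ y) (hy : y ∈ B) : x ∈ B :=
  h.summandB x y ⟨e.hom, e.inv, e.hom_inv_id⟩ hy

lemma mem_B_of_hom_eq_zero (h : CoTStructure A B) {t : C}
    (ht : ∀ a ∈ A, ∀ f : a ⟶ t, f = 0) : t ∈ B := by
  obtain ⟨a, b, ha, hb, f, g, k, hT⟩ := h.tri t
  obtain ⟨r, hr⟩ := Triangle.yoneda_exact₂ _ hT (𝟙 t) ((comp_id f).trans (ht a ha f))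
  exact h.summandB t b ⟨g, r, hr.symm⟩ hb

lemma mem_A_of_hom_eq_zero (h : CoTStructure A B) {t : C}
    (ht : ∀ b ∈ B, ∀ f : t ⟶ b, f = 0) : t ∈ A := by
  obtain ⟨a, b, ha, hb, f, g, k, hT⟩ := h.tri t
  obtain ⟨s, hs⟩ := Triangle.coyoneda_exact₂ _ hT (𝟙 t) ((id_comp g).trans (ht b hb g))
  exact h.summandA t a ⟨s, f, hs.symm⟩ ha

lemma mem_B_of_distTriang (h : CoTStructure A B) {T : Triangle C} (hT : T ∈ distTriang C)
    (h₁ : T.obj₁ ∈ B) (h₃ : T.obj₃ ∈ B) : T.obj₂ ∈ B := by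
  refine h.mem_B_of_hom_eq_zero fun a ha φ => ?_
  obtain ⟨ψ, rfl⟩ := Triangle.coyoneda_exact₂ T hT φ (h.orth a ha _ h₃ _)
  rw [h.orth a ha _ h₁ ψ, zero_comp]

lemma mem_A_of_distTriang (h : CoTStructure A B) {T : Triangle C} (hT : T ∈ distTriang C)
    (h₁ : T.obj₁ ∈ A) (h₃ : T.obj₃ ∈ A) : T.obj₂ ∈ A := by
  refine h.mem_A_of_hom_eq_zero fun b hb φ => ?_
  obtain ⟨ψ, rfl⟩ := Triangle.yoneda_exact₂ T hT φ (h.orth _ h₁ b hb _)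
  rw [h.orth _ h₃ b hb ψ, comp_zero]

lemma hom_to_shift_eq_zero (h : CoTStructure A B) {x y : C} (hx : x⟦(-1 : ℤ)⟧ ∈ A)
    (hy : y ∈ B) (f : x ⟶ y⟦(1 : ℤ)⟧) : f = 0 := by
  rw [← (shiftFunctor C (-1 : ℤ)).map_eq_zero_iff]
  exact h.orth _ hx _ (h.mem_B_of_iso (shiftShiftNeg y (1 : ℤ)) hy) _

end CoTStructure

/-- If `(A, B)` and `(A', B')` are co-t-structures with `A ⊆ A' ⊆ ΣA`, then
`ΣB ⊆ B' ⊆ B` and the co-heart of `(A', B')` is contained in `S * ΣS`,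
where `S` is the co-heart of `(A, B)`. -/
theorem stmt_5 (A B A' B' : Set C) (h : CoTStructure A B) (h' : CoTStructure A' B')
    (h₁ : A ⊆ A') (h₂ : ∀ x ∈ A', x⟦(-1 : ℤ)⟧ ∈ A) :
    (∀ x ∈ B, x⟦(1 : ℤ)⟧ ∈ B') ∧ B' ⊆ B ∧
    coheart A' B' ⊆ twoTermSet (coheart A B) := by
  have hB' : B' ⊆ B := fun b' hb' =>
    h.mem_B_of_hom_eq_zero fun a ha f => h'.orth a (h₁ ha) b' hb' f
  refine ⟨fun b hb => h'.mem_B_of_hom_eq_zero fun a' ha' f =>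
    h.hom_to_shift_eq_zero (h₂ a' ha') hb f, hB', ?_⟩
  rintro x ⟨hxA', hxB'⟩
  obtain ⟨a, b, ha, hb, f, g, k, hT⟩ := h.tri x
  have haB : a⟦(1 : ℤ)⟧ ∈ B :=
    h.mem_B_of_distTriang (rot_of_distTriang _ (rot_of_distTriang _ hT)) hb (hB' hxB')
  have hbA : b⟦(-1 : ℤ)⟧ ∈ A :=
    h.mem_A_of_distTriang (inv_rot_of_distTriang _ (inv_rot_of_distTriang _ hT)) (h₂ x hxA') ha
  let T := (Triangle.mk f g k).invRotate
  exact ⟨_, _, ⟨hbA, h.mem_B_of_iso (shiftNegShift b (1 : ℤ)) hb⟩, ⟨ha, haB⟩,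
    T.mor₁, T.mor₂, T.mor₃, inv_rot_of_distTriang _ hT⟩
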